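/- For a nondominated set Y ⊆ (0,∞)², each point y ∈ Y uniquely minimizes the Tchebycheff utility over Y at the weight w* = y₂/(y₁ + y₂), i.e., max(w*·y₁, (1−w*)·y₂) < max(w*·z₁, (1−w*)·z₂) for all z ∈ Y with z ≠ y. -/

import Mathlib

def tchebycheff (w : ℝ) (y : ℝ × ℝ) : ℝ := max (w * y.1) ((1 - w) * y.2)

/-- The paper's `w*`: the weight at which both terms of `tchebycheff w y` coincide. -/
noncomputable def balancingWeight (y : ℝ × ℝ) : ℝ := y.2 / (y.1 + y.2)

section

variable {y : ℝ × ℝ}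

lemma balancingWeight_pos (h1 : 0 < y.1) (h2 : 0 < y.2) : 0 < balancingWeight y :=
  div_pos h2 (add_pos h1 h2)

lemma one_sub_balancingWeight (h : y.1 + y.2 ≠ 0) :
    1 - balancingWeight y = y.1 / (y.1 + y.2) := by
  rw [balancingWeight, one_sub_div h, add_sub_cancel_right]

lemma balancingWeight_lt_one (h1 : 0 < y.1) (h2 : 0 < y.2) : balancingWeight y < 1 := by
  have : 0 < 1 - balancingWeight y := by
    rw [one_sub_balancingWeight (add_pos h1 h2).ne']
    exact div_pos h1 (add_pos h1 h2)
  linarith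

lemma balancingWeight_balances (h : y.1 + y.2 ≠ 0) :
    balancingWeight y * y.1 = (1 - balancingWeight y) * y.2 := by
  rw [one_sub_balancingWeight h, balancingWeight]
  ring

end

lemma tchebycheff_lt_of_balanced {w : ℝ} {y z : ℝ × ℝ} (hw0 : 0 < w) (hw1 : w < 1)
    (hbal : w * y.1 = (1 - w) * y.2) (h : y.1 < z.1 ∨ y.2 < z.2) :
    tchebycheff w y < tchebycheff w z := by
  rw [tchebycheff, hbal, max_self]
  rcases h with h | h
  · exact lt_max_of_lt_left (hbal ▸ mul_lt_mul_of_pos_left h hw0)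
  · exact lt_max_of_lt_right (mul_lt_mul_of_pos_left h (sub_pos.mpr hw1))

theorem unique_minimizer_at_wstar (Y : Set (ℝ × ℝ))
    (hpos : ∀ y ∈ Y, 0 < y.1 ∧ 0 < y.2)
    (hnd : ∀ y ∈ Y, ∀ z ∈ Y, z ≠ y → ¬ (z.1 ≤ y.1 ∧ z.2 ≤ y.2)) :
    ∀ y ∈ Y, ∀ z ∈ Y, z ≠ y →
      max ((y.2 / (y.1 + y.2)) * y.1) ((1 - y.2 / (y.1 + y.2)) * y.2) <
      max ((y.2 / (y.1 + y.2)) * z.1) ((1 - y.2 / (y.1 + y.2)) * z.2) := by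
  intro y hy z hz hne
  obtain ⟨hy1, hy2⟩ := hpos y hy
  have hexceeds : y.1 < z.1 ∨ y.2 < z.2 := by
    simpa only [not_and_or, not_le] using hnd y hy z hz hne
  exact tchebycheff_lt_of_balanced (balancingWeight_pos hy1 hy2)
    (balancingWeight_lt_one hy1 hy2) (balancingWeight_balances (add_pos hy1 hy2).ne') hexceeds
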